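/- Let p, q ∈ ℂ and let I ⊆ F be the two-sided ideal generated by the three elements x₂x₁ − x₁x₂, x₃x₁ − x₁x₃ + q x₁², and x₃x₂ − x₂x₃ + (2q − p) x₁x₂. Then the images in F/I of the monomials x₁^{a₁} x₂^{a₂} x₃^{a₃}, over all a₁, a₂, a₃ ∈ ℕ, form a ℂ-basis of F/I. (This quotient is the Nichols algebra associated to the braiding of type R_{1,2} with t = 1 and b = p − 2q; it has Gelfand–Kirillov dimension 3.) -/

import Mathlib

/-- The free associative unital `ℂ`-algebra on three generators. -/
abbrev F : Type := FreeAlgebra ℂ (Fin 3)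

/-- The generators `x₁ = X 0`, `x₂ = X 1`, `x₃ = X 2`. -/
noncomputable def X (i : Fin 3) : F := FreeAlgebra.ι ℂ i

/-- Generators: `x₂x₁ − x₁x₂`, `x₃x₁ − x₁x₃ + q x₁²`, `x₃x₂ − x₂x₃ + (2q − p) x₁x₂`. -/
noncomputable def S (p q : ℂ) : Set F :=
  {X 1 * X 0 - X 0 * X 1,
   X 2 * X 0 - X 0 * X 2 + q • (X 0 * X 0),
   X 2 * X 1 - X 1 * X 2 + (2 * q - p) • (X 0 * X 1)}

/-- The relation whose two-sided-ideal closure is the ideal generated by `S`;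
`RingQuot rel` is the quotient `F/I`. -/
def rel (p q : ℂ) : F → F → Prop := fun x y => x ∈ S p q ∧ y = 0

/-!
Write `r = 2q − p`. In `F/I` we have `x₃x₁ = x₁(x₃ − q x₁)` and `x₃x₂ = x₂(x₃ − r x₁)`, so
`x₃ · x₁^a x₂^b x₃^c = x₁^a x₂^b x₃^(c+1) − (b r + a q) x₁^(a+1) x₂^b x₃^c`; together with
`x₂x₁ = x₁x₂` this shows that the span of the ordered monomials is stable under left
multiplication by the generators, hence is everything.

For independence, `F/I` acts on `ℂ[x₁, x₂, x₃]`: `x₁` and `x₂` by multiplication and `x₃` by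
`x₃ − x₁ D`, where `D` is the derivation with `D x₁ = q x₁`, `D x₂ = r x₂`, `D x₃ = 0` (it multiplies
`x₁^a x₂^b x₃^c` by `a q + b r`, mirroring the formula above). The ordered monomial
`x₁^a x₂^b x₃^c` sends `1` to the polynomial `x₁^a x₂^b x₃^c`, and these are independent.
-/

theorem mul_pow_eq_pow_mul_sub_nsmul {A : Type*} [Ring A] {w z d : A} (hd : Commute w d)
    (h : z * w = w * (z - d)) (n : ℕ) : z * w ^ n = w ^ n * (z - n • d) := by
  induction n with
  | zero => simp
  | succ n ih =>
    calc z * w ^ (n + 1) = w * (z * w ^ n - d * w ^ n) := by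
          rw [pow_succ', ← mul_assoc, h, mul_assoc, sub_mul]
      _ = w ^ (n + 1) * (z - (n + 1) • d) := by
          rw [ih, ← (hd.pow_left n).eq, ← mul_sub, ← mul_assoc, ← pow_succ', succ_nsmul,
            sub_add_eq_sub_sub]

theorem Submodule.eq_top_of_one_mem_of_mul_mem {R A : Type*} [CommSemiring R] [Semiring A]
    [Algebra R A] {s : Set A} (hs : Algebra.adjoin R s = ⊤) {W : Submodule R A} (h1 : 1 ∈ W)
    (hmul : ∀ g ∈ s, ∀ w ∈ W, g * w ∈ W) : W = ⊤ := by
  have hstable : ∀ a ∈ Algebra.adjoin R s, ∀ w ∈ W, a * w ∈ W := by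
    intro a ha
    induction ha using Algebra.adjoin_induction with
    | mem g hg => exact hmul g hg
    | algebraMap c => exact fun w hw => Algebra.smul_def c w ▸ W.smul_mem c hw
    | add a b _ _ ha hb => exact fun w hw => (add_mul a b w).symm ▸ W.add_mem (ha w hw) (hb w hw)
    | mul a b _ _ ha hb => exact fun w hw => (mul_assoc a b w).symm ▸ ha _ (hb w hw)
  exact eq_top_iff.mpr fun a _ => mul_one a ▸ hstable a (hs ▸ Algebra.mem_top) 1 h1

section R12

variable {R A : Type*} [CommRing R] [Ring A] [Algebra R A]

structure R12Relations (q r : R) (x y z : A) : Prop where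
  yx : y * x - x * y = 0
  zx : z * x - x * z + q • (x * x) = 0
  zy : z * y - y * z + r • (x * y) = 0

namespace R12Relations

variable {q r : R} {x y z : A} (h : R12Relations q r x y z)
include h

theorem commute_xy : Commute x y := (sub_eq_zero.mp h.yx).symm

theorem z_mul_x_pow (a : ℕ) : z * x ^ a = x ^ a * (z - (a * q) • x) := by
  have hzx : z * x = x * (z - q • x) := by
    rw [← sub_eq_zero, ← h.zx, mul_sub, mul_smul_comm]; abel
  rw [mul_pow_eq_pow_mul_sub_nsmul ((Commute.refl x).smul_right q) hzx,
    ← Nat.cast_smul_eq_nsmul R, smul_smul]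

theorem z_mul_y_pow (b : ℕ) : z * y ^ b = y ^ b * (z - (b * r) • x) := by
  have hzy : z * y = y * (z - r • x) := by
    rw [← sub_eq_zero, ← h.zy, mul_sub, mul_smul_comm, h.commute_xy.eq]; abel
  rw [mul_pow_eq_pow_mul_sub_nsmul (h.commute_xy.symm.smul_right r) hzy,
    ← Nat.cast_smul_eq_nsmul R, smul_smul]

theorem z_mul_monomial (a b c : ℕ) :
    z * (x ^ a * y ^ b * z ^ c) =
      x ^ a * y ^ b * z ^ (c + 1) - (b * r + a * q) • (x ^ (a + 1) * y ^ b * z ^ c) := by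
  have hyx : y ^ b * x = x * y ^ b := (h.commute_xy.pow_right b).eq.symm
  rw [mul_assoc, ← mul_assoc, h.z_mul_x_pow, mul_assoc, sub_mul, ← mul_assoc z, h.z_mul_y_pow,
    pow_succ' z, pow_succ x]
  simp only [mul_sub, sub_mul, smul_mul_assoc, mul_smul_comm, add_smul, mul_assoc, hyx]
  abel

theorem span_monomials_eq_top (hgen : Algebra.adjoin R {x, y, z} = ⊤) :
    Submodule.span R (Set.range fun e : ℕ × ℕ × ℕ => x ^ e.1 * y ^ e.2.1 * z ^ e.2.2) = ⊤ := by
  set W := Submodule.span R (Set.range fun e : ℕ × ℕ × ℕ => x ^ e.1 * y ^ e.2.1 * z ^ e.2.2)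
  have hmem (a b c : ℕ) : x ^ a * y ^ b * z ^ c ∈ W := Submodule.subset_span ⟨(a, b, c), rfl⟩
  refine Submodule.eq_top_of_one_mem_of_mul_mem hgen (by simpa using hmem 0 0 0) ?_
  rintro g hg w hw
  induction hw using Submodule.span_induction with
  | mem _ hm =>
    obtain ⟨⟨a, b, c⟩, rfl⟩ := hm
    rcases hg with rfl | rfl | rfl
    · simpa only [← mul_assoc, ← pow_succ'] using hmem (a + 1) b c
    · rw [← mul_assoc, ← mul_assoc, (h.commute_xy.pow_left a).eq.symm, mul_assoc _ g, ← pow_succ']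
      exact hmem a (b + 1) c
    · rw [h.z_mul_monomial]
      exact W.sub_mem (hmem a b (c + 1)) (W.smul_mem _ (hmem (a + 1) b c))
  | zero => simp
  | add u v _ _ hu hv => exact (mul_add g u v).symm ▸ W.add_mem hu hv
  | smul c u _ hu => exact (mul_smul_comm c g u).symm ▸ W.smul_mem c hu

end R12Relations

end R12

section Representation

open MvPolynomial (C)

variable {R : Type*} [CommRing R]

theorem MvPolynomial.linearIndependent_X_pow_mul_X_pow_mul_X_pow :
    LinearIndependent R (fun e : ℕ × ℕ × ℕ =>
      (X 0 ^ e.1 * X 1 ^ e.2.1 * X 2 ^ e.2.2 : MvPolynomial (Fin 3) R)) := by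
  let exponent (e : ℕ × ℕ × ℕ) : Fin 3 →₀ ℕ := Finsupp.equivFunOnFinite.symm ![e.1, e.2.1, e.2.2]
  have hinj : Function.Injective exponent := by
    rintro ⟨a, b, c⟩ ⟨a', b', c'⟩ he
    simpa [exponent] using congrArg Finsupp.equivFunOnFinite he
  have hmonomial (e : ℕ × ℕ × ℕ) :
      (X 0 ^ e.1 * X 1 ^ e.2.1 * X 2 ^ e.2.2 : MvPolynomial (Fin 3) R) =
        monomial (exponent e) 1 := by
    simp [exponent, monomial_eq, Finsupp.prod_fintype, Fin.prod_univ_three]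
  simp only [hmonomial]
  exact (basisMonomials (Fin 3) R).linearIndependent.comp exponent hinj

noncomputable def r12Derivation (q r : R) :
    Derivation R (MvPolynomial (Fin 3) R) (MvPolynomial (Fin 3) R) :=
  MvPolynomial.mkDerivation R ![C q * MvPolynomial.X 0, C r * MvPolynomial.X 1, 0]

noncomputable def r12OpZ (q r : R) : Module.End R (MvPolynomial (Fin 3) R) :=
  LinearMap.mulLeft R (MvPolynomial.X 2) -
    LinearMap.mulLeft R (MvPolynomial.X 0) * (r12Derivation q r).toLinearMap

theorem r12Relations_mulLeft_X (q r : R) :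
    R12Relations q r (LinearMap.mulLeft R (MvPolynomial.X 0 : MvPolynomial (Fin 3) R))
      (LinearMap.mulLeft R (MvPolynomial.X 1)) (r12OpZ q r) := by
  constructor <;> refine LinearMap.ext fun f => ?_ <;>
    simp [r12OpZ, r12Derivation, Derivation.leibniz, MvPolynomial.mkDerivation_X,
      MvPolynomial.smul_eq_C_mul] <;> ring

theorem r12OpZ_pow_apply_one (q r : R) (c : ℕ) :
    (r12OpZ q r ^ c) 1 = (MvPolynomial.X 2 : MvPolynomial (Fin 3) R) ^ c := by
  induction c with
  | zero => simp
  | succ c ih =>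
    rw [pow_succ', Module.End.mul_apply, ih]
    simp [r12OpZ, r12Derivation, Derivation.leibniz_pow, MvPolynomial.mkDerivation_X, pow_succ']

end Representation

section Quotient

variable {p q : ℂ}

noncomputable def R12Relations.liftRingQuot {A : Type*} [Ring A] [Algebra ℂ A] {x y z : A}
    (h : R12Relations q (2 * q - p) x y z) : RingQuot (rel p q) →ₐ[ℂ] A :=
  RingQuot.liftAlgHom ℂ ⟨FreeAlgebra.lift ℂ ![x, y, z], by
    rintro a b ⟨ha, rfl⟩
    rcases ha with rfl | rfl | rfl <;> simp [X, h.yx, h.zx, h.zy]⟩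

theorem R12Relations.liftRingQuot_mkAlgHom_X {A : Type*} [Ring A] [Algebra ℂ A] {x y z : A}
    (h : R12Relations q (2 * q - p) x y z) (i : Fin 3) :
    h.liftRingQuot (RingQuot.mkAlgHom ℂ (rel p q) (X i)) = ![x, y, z] i := by
  simp [R12Relations.liftRingQuot, X]

variable (p q)

theorem r12Relations_mkAlgHom_X :
    R12Relations q (2 * q - p) (RingQuot.mkAlgHom ℂ (rel p q) (X 0))
      (RingQuot.mkAlgHom ℂ (rel p q) (X 1)) (RingQuot.mkAlgHom ℂ (rel p q) (X 2)) := by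
  have hS {s : F} (hs : s ∈ S p q) : RingQuot.mkAlgHom ℂ (rel p q) s = 0 :=
    (RingQuot.mkAlgHom_rel ℂ ⟨hs, rfl⟩).trans (map_zero _)
  refine ⟨?_, ?_, ?_⟩
  · simpa using hS (Or.inl rfl)
  · simpa using hS (Or.inr (Or.inl rfl))
  · simpa using hS (Or.inr (Or.inr rfl))

theorem adjoin_mkAlgHom_X_eq_top :
    Algebra.adjoin ℂ {RingQuot.mkAlgHom ℂ (rel p q) (X 0), RingQuot.mkAlgHom ℂ (rel p q) (X 1),
      RingQuot.mkAlgHom ℂ (rel p q) (X 2)} = ⊤ := by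
  have himage : RingQuot.mkAlgHom ℂ (rel p q) '' Set.range (FreeAlgebra.ι ℂ) =
      {RingQuot.mkAlgHom ℂ (rel p q) (X 0), RingQuot.mkAlgHom ℂ (rel p q) (X 1),
        RingQuot.mkAlgHom ℂ (rel p q) (X 2)} := by
    ext; simp [Fin.exists_fin_succ, X, eq_comm]
  rw [← himage, ← AlgHom.map_adjoin, FreeAlgebra.adjoin_range_ι, Algebra.map_top,
    AlgHom.range_eq_top]
  exact RingQuot.mkAlgHom_surjective ℂ (rel p q)

theorem linearIndependent_mkAlgHom_monomials :
    LinearIndependent ℂ fun e : ℕ × ℕ × ℕ => RingQuot.mkAlgHom ℂ (rel p q) (X 0) ^ e.1 *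
      RingQuot.mkAlgHom ℂ (rel p q) (X 1) ^ e.2.1 * RingQuot.mkAlgHom ℂ (rel p q) (X 2) ^ e.2.2 := by
  let ψ := (r12Relations_mulLeft_X q (2 * q - p)).liftRingQuot
  refine LinearIndependent.of_comp (LinearMap.applyₗ 1 ∘ₗ ψ.toLinearMap) ?_
  have hmonomial (e : ℕ × ℕ × ℕ) : ψ (RingQuot.mkAlgHom ℂ (rel p q) (X 0) ^ e.1 *
      RingQuot.mkAlgHom ℂ (rel p q) (X 1) ^ e.2.1 * RingQuot.mkAlgHom ℂ (rel p q) (X 2) ^ e.2.2) 1 =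
      MvPolynomial.X 0 ^ e.1 * MvPolynomial.X 1 ^ e.2.1 * MvPolynomial.X 2 ^ e.2.2 := by
    simp [ψ, R12Relations.liftRingQuot_mkAlgHom_X, r12OpZ_pow_apply_one, LinearMap.pow_mulLeft,
      mul_assoc]
  simp only [Function.comp_def, LinearMap.comp_apply, AlgHom.toLinearMap_apply,
    LinearMap.applyₗ_apply_apply, hmonomial]
  exact MvPolynomial.linearIndependent_X_pow_mul_X_pow_mul_X_pow

end Quotient

/-- the images in `F/I` of the monomials `x₁^{a₁} x₂^{a₂} x₃^{a₃}` form a `ℂ`-basis. -/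
theorem basis_R12_t_one_b_eq (p q : ℂ) :
    LinearIndependent ℂ (fun e : ℕ × ℕ × ℕ =>
      RingQuot.mkAlgHom ℂ (rel p q) (X 0 ^ e.1 * X 1 ^ e.2.1 * X 2 ^ e.2.2)) ∧
    Submodule.span ℂ (Set.range (fun e : ℕ × ℕ × ℕ =>
      RingQuot.mkAlgHom ℂ (rel p q) (X 0 ^ e.1 * X 1 ^ e.2.1 * X 2 ^ e.2.2))) = ⊤ := by
  simp only [map_mul, map_pow]
  exact ⟨linearIndependent_mkAlgHom_monomials p q,
    (r12Relations_mkAlgHom_X p q).span_monomials_eq_top (adjoin_mkAlgHom_X_eq_top p q)⟩
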